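/- Let A ⊆ ℝ be an open invex set with respect to η : A × A → ℝ and suppose f : A → ℝ is a differentiable function. Let p ∈ ℝ with p > 1. If |f′|^{p/(p−1)} is preinvex with respect to η on A, then for every a, b ∈ A with a < a + η(b,a): | (f(a) + f(a+η(b,a)))/2 − (1/η(b,a)) · ∫_a^{a+η(b,a)} f(x) dx | ≤ (|η(b,a)| / (2(p+1)^{1/p})) · (max{|f′(a)|^{p/(p−1)}, |f′(b)|^{p/(p−1)}})^{(p−1)/p}. -/

import Mathlib

open Real MeasureTheory Set
open scoped NNReal

/-!
Along the segment `a + t η(b,a)`, `t ∈ [0,1]`, preinvexity bounds `|f'|^q` (with `q = p/(p-1)`)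
by `max (|f' a|^q) (|f' b|^q)`, so by the mean value theorem `f` is Lipschitz on
`[a, a + η(b,a)]` with constant `K = (max (|f' a|^q) (|f' b|^q))^(1/q)`. For a `K`-Lipschitz
function on `[a, b]` the trapezoid error is at most `K (b - a) / 4`: split at the midpoint and
compare `f` with its value at the nearer endpoint. Finally `(p + 1)^(1/p) ≤ 2` by Bernoulli's
inequality.
-/

section Trapezoid

variable {f : ℝ → ℝ} {K : ℝ≥0} {a b : ℝ}

theorem LipschitzOnWith.abs_integral_sub_left_le (hab : a ≤ b)
    (hf : LipschitzOnWith K f (Icc a b)) :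
    |∫ x in a..b, (f a - f x)| ≤ K * (b - a) ^ 2 / 2 := by
  calc |∫ x in a..b, (f a - f x)| ≤ ∫ x in a..b, K * (x - a) := by
        rw [← Real.norm_eq_abs]
        refine intervalIntegral.norm_integral_le_of_norm_le hab (ae_of_all _ fun x hx => ?_)
          ((continuous_const.mul (continuous_id.sub continuous_const)).intervalIntegrable _ _)
        have := hf.dist_le_mul a (left_mem_Icc.2 hab) x (Ioc_subset_Icc_self hx)
        rwa [Real.dist_eq, Real.dist_eq, abs_sub_comm a x,
          abs_of_nonneg (by linarith [hx.1] : 0 ≤ x - a), ← Real.norm_eq_abs] at this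
    _ = K * (b - a) ^ 2 / 2 := by
        rw [intervalIntegral.integral_const_mul, intervalIntegral.integral_sub
          intervalIntegral.intervalIntegrable_id intervalIntegrable_const]
        simp only [integral_id, intervalIntegral.integral_const, smul_eq_mul]
        ring

theorem LipschitzOnWith.abs_integral_sub_right_le (hab : a ≤ b)
    (hf : LipschitzOnWith K f (Icc a b)) :
    |∫ x in a..b, (f b - f x)| ≤ K * (b - a) ^ 2 / 2 := by
  calc |∫ x in a..b, (f b - f x)| ≤ ∫ x in a..b, K * (b - x) := by
        rw [← Real.norm_eq_abs]
        refine intervalIntegral.norm_integral_le_of_norm_le hab (ae_of_all _ fun x hx => ?_)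
          ((continuous_const.mul (continuous_const.sub continuous_id)).intervalIntegrable _ _)
        have := hf.dist_le_mul b (right_mem_Icc.2 hab) x (Ioc_subset_Icc_self hx)
        rwa [Real.dist_eq, Real.dist_eq, abs_of_nonneg (by linarith [hx.2] : 0 ≤ b - x),
          ← Real.norm_eq_abs] at this
    _ = K * (b - a) ^ 2 / 2 := by
        rw [intervalIntegral.integral_const_mul, intervalIntegral.integral_sub
          intervalIntegrable_const intervalIntegral.intervalIntegrable_id]
        simp only [integral_id, intervalIntegral.integral_const, smul_eq_mul]
        ring

theorem LipschitzOnWith.abs_trapezoid_sub_average_le (hab : a < b)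
    (hf : LipschitzOnWith K f (Icc a b)) :
    |(f a + f b) / 2 - 1 / (b - a) * ∫ x in a..b, f x| ≤ K * (b - a) / 4 := by
  set m := (a + b) / 2
  have ham : a ≤ m := by simp only [m]; linarith
  have hmb : m ≤ b := by simp only [m]; linarith
  have hint : ∀ c ∈ Icc a b, ∀ d ∈ Icc a b, IntervalIntegrable f volume c d :=
    fun c hc d hd => (hf.continuousOn.mono (uIcc_subset_Icc hc hd)).intervalIntegrable
  have hint_am := hint a (left_mem_Icc.2 hab.le) m ⟨ham, hmb⟩
  have hint_mb := hint m ⟨ham, hmb⟩ b (right_mem_Icc.2 hab.le)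
  have hsplit : (f a + f b) / 2 - 1 / (b - a) * ∫ x in a..b, f x
      = 1 / (b - a) * ((∫ x in a..m, (f a - f x)) + ∫ x in m..b, (f b - f x)) := by
    rw [intervalIntegral.integral_sub intervalIntegrable_const hint_am,
      intervalIntegral.integral_sub intervalIntegrable_const hint_mb,
      intervalIntegral.integral_const, intervalIntegral.integral_const,
      ← intervalIntegral.integral_add_adjacent_intervals hint_am hint_mb]
    field_simp [(sub_pos.2 hab).ne']
    simp only [m, smul_eq_mul]
    ring
  have hl := (hf.mono (Icc_subset_Icc_right hmb)).abs_integral_sub_left_le ham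
  have hr := (hf.mono (Icc_subset_Icc_left ham)).abs_integral_sub_right_le hmb
  rw [hsplit, abs_mul, abs_of_pos (one_div_pos.2 (sub_pos.2 hab))]
  calc 1 / (b - a) * |(∫ x in a..m, (f a - f x)) + ∫ x in m..b, (f b - f x)|
      ≤ 1 / (b - a) * (K * (m - a) ^ 2 / 2 + K * (b - m) ^ 2 / 2) := by
        gcongr
        exact (abs_add_le _ _).trans (add_le_add hl hr)
    _ = K * (b - a) / 4 := by
        field_simp [(sub_pos.2 hab).ne']
        simp only [m]
        ring

end Trapezoid

theorem le_max_rpow_inv_of_rpow_le_combo {u α β t q : ℝ} (hu : 0 ≤ u) (hq : 0 < q)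
    (ht : t ∈ Icc (0 : ℝ) 1) (h : u ^ q ≤ (1 - t) * α + t * β) : u ≤ max α β ^ q⁻¹ := by
  have hmax : u ^ q ≤ max α β :=
    h.trans (Convex.combo_le_max α β (sub_nonneg.2 ht.2) ht.1 (sub_add_cancel 1 t))
  exact (le_rpow_inv_iff_of_pos hu ((rpow_nonneg hu q).trans hmax) hq).2 hmax

theorem add_one_rpow_inv_le_two {p : ℝ} (hp : 1 ≤ p) : (p + 1) ^ p⁻¹ ≤ 2 := by
  have hbernoulli : p + 1 ≤ 2 ^ p := by
    have := one_add_mul_self_le_rpow_one_add (s := 1) (by norm_num) hp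
    norm_num at this
    linarith
  exact (rpow_inv_le_iff_of_pos (by linarith) zero_le_two (by linarith)).2 hbernoulli

theorem Icc_add_eq_image_unitInterval {a T : ℝ} (hT : 0 ≤ T) :
    Icc a (a + T) = (fun t => a + t * T) '' Icc 0 1 := by
  rw [← segment_eq_Icc (le_add_of_nonneg_right hT), segment_eq_image']
  simp

theorem preinvex_deriv_pow_HH_general
    (A : Set ℝ) (η : ℝ → ℝ → ℝ) (f f' : ℝ → ℝ) (p : ℝ)
    (hinv : ∀ x ∈ A, ∀ y ∈ A, ∀ t ∈ Icc (0:ℝ) 1, x + t * η y x ∈ A)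
    (hder : ∀ x ∈ A, HasDerivAt f (f' x) x)
    (hp : 1 < p)
    (hpre : ∀ x ∈ A, ∀ y ∈ A, ∀ t ∈ Icc (0:ℝ) 1,
      |f' (x + t * η y x)| ^ (p / (p - 1))
        ≤ (1 - t) * |f' x| ^ (p / (p - 1)) + t * |f' y| ^ (p / (p - 1))) :
    ∀ a ∈ A, ∀ b ∈ A, a < a + η b a →
      |(f a + f (a + η b a)) / 2 - (1 / η b a) * ∫ x in a..(a + η b a), f x|
        ≤ |η b a| / (2 * (p + 1) ^ (1 / p)) *
            (max (|f' a| ^ (p / (p - 1))) (|f' b| ^ (p / (p - 1)))) ^ ((p - 1) / p) := by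
  intro a ha b hb hab
  set T := η b a
  have hT : 0 < T := by linarith
  have hq : 0 < p / (p - 1) := div_pos (by linarith) (by linarith)
  set K := (max (|f' a| ^ (p / (p - 1))) (|f' b| ^ (p / (p - 1)))) ^ ((p - 1) / p)
  have hsegment : ∀ x ∈ Icc a (a + T), x ∈ A ∧ |f' x| ≤ K := by
    rw [Icc_add_eq_image_unitInterval hT.le]
    rintro _ ⟨t, ht, rfl⟩
    refine ⟨hinv a ha b hb t ht, ?_⟩
    have := le_max_rpow_inv_of_rpow_le_combo (abs_nonneg _) hq ht (hpre a ha b hb t ht)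
    rwa [inv_div] at this
  have hK : 0 ≤ K := (abs_nonneg _).trans (hsegment a (left_mem_Icc.2 hab.le)).2
  have hlip : LipschitzOnWith ⟨K, hK⟩ f (Icc a (a + T)) :=
    (convex_Icc _ _).lipschitzOnWith_of_nnnorm_hasDerivWithin_le
      (fun x hx => (hder x (hsegment x hx).1).hasDerivWithinAt)
      (fun x hx => NNReal.coe_le_coe.1 (hsegment x hx).2)
  have htrap := hlip.abs_trapezoid_sub_average_le hab
  rw [add_sub_cancel_left] at htrap
  calc _ ≤ K * T / 4 := htrap
    _ ≤ |T| / (2 * (p + 1) ^ (1 / p)) * K := by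
      rw [abs_of_pos hT, one_div, mul_comm K, div_mul_eq_mul_div]
      gcongr
      linarith [add_one_rpow_inv_le_two hp.le]

/-- Hermite–Hadamard type inequality (Barani et al.) for
differentiable functions with `|f'|^{p/(p-1)}` preinvex, `p > 1`. -/
theorem preinvex_deriv_pow_HH
    (A : Set ℝ) (η : ℝ → ℝ → ℝ) (f f' : ℝ → ℝ) (p : ℝ)
    (hA : IsOpen A)
    (hinv : ∀ x ∈ A, ∀ y ∈ A, ∀ t ∈ Icc (0:ℝ) 1, x + t * η y x ∈ A)
    (hder : ∀ x ∈ A, HasDerivAt f (f' x) x)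
    (hp : 1 < p)
    (hpre : ∀ x ∈ A, ∀ y ∈ A, ∀ t ∈ Icc (0:ℝ) 1,
      |f' (x + t * η y x)| ^ (p / (p - 1))
        ≤ (1 - t) * |f' x| ^ (p / (p - 1)) + t * |f' y| ^ (p / (p - 1))) :
    ∀ a ∈ A, ∀ b ∈ A, a < a + η b a →
      |(f a + f (a + η b a)) / 2 - (1 / η b a) * ∫ x in a..(a + η b a), f x|
        ≤ |η b a| / (2 * (p + 1) ^ (1 / p)) *
            (max (|f' a| ^ (p / (p - 1))) (|f' b| ^ (p / (p - 1)))) ^ ((p - 1) / p) :=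
  preinvex_deriv_pow_HH_general A η f f' p hinv hder hp hpre
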